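/- arXiv:1807.04494 — 4 statements merged into one kernel-verified Lean document; each statement's English description precedes it below -/
import Mathlib

section
/- There is no k ∈ ℕ and k-color edge coloring model h ∈ (S V_k)* such that p_h(G) = p(G;0) for all graphs G; that is, the evaluation of the characteristic polynomial at 0 is not the partition function of any edge coloring model. -/
open scoped TensorProduct

/-! ### Finite multigraphs

A finite multigraph: vertices are `Fin n`, edges are `Fin m`.  An edge either has an
(arbitrarily ordered) pair of endpoints — a loop when the two endpoints coincide — or
no endpoints at all (`none`), the latter representing the *circle* `○`, the connected
graph consisting of a single edge and no vertices. -/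
structure MGraph where
  n : ℕ
  m : ℕ
  ends : Fin m → Option (Fin n × Fin n)

/-- A *dart* is an edge together with one of its two ends; `dartVertex` is the vertex at
which this end is located (`none` for circle edges). -/
def dartVertex (G : MGraph) (d : Fin G.m × Bool) : Option (Fin G.n) :=
  (G.ends d.1).map fun p => if d.2 then p.2 else p.1

/-- The other dart of the same edge. -/
def flipDart (G : MGraph) (d : Fin G.m × Bool) : Fin G.m × Bool := (d.1, !d.2)

/-- The degree of the vertex `v` in the spanning subgraph `(V,F)`; loops count twice. -/
def degF (G : MGraph) (F : Finset (Fin G.m)) (v : Fin G.n) : ℕ :=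
  (Finset.univ.filter fun d : Fin G.m × Bool => d.1 ∈ F ∧ dartVertex G d = some v).card

/-- The degree of a vertex (loops count twice). -/
def degreeV (G : MGraph) (v : Fin G.n) : ℕ := degF G Finset.univ v

/-- `F ⊆ E` is Eulerian if every vertex of `(V,F)` has even degree. -/
def IsEulerianSet (G : MGraph) (F : Finset (Fin G.m)) : Prop := ∀ v, Even (degF G F v)

/-- The spanning subgraph `G(F) = (V,F)`. -/
def subgraphOf (G : MGraph) (F : Finset (Fin G.m)) : MGraph where
  n := G.n
  m := F.card
  ends := fun i => G.ends ((F.orderIsoOfFin rfl i : Fin G.m))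

/-- The empty graph. -/
def emptyMGraph : MGraph := ⟨0, 0, fun _ => none⟩

/-- The circle `○`: one edge, no vertices. -/
def circleGraph : MGraph := ⟨0, 1, fun _ => none⟩

/-- Disjoint union of two multigraphs. -/
def disjUnion (G H : MGraph) : MGraph where
  n := G.n + H.n
  m := G.m + H.m
  ends := fun e =>
    match finSumFinEquiv.symm e with
    | Sum.inl e => (G.ends e).map (Prod.map (Fin.castAdd H.n) (Fin.castAdd H.n))
    | Sum.inr e => (H.ends e).map (Prod.map (Fin.natAdd G.n) (Fin.natAdd G.n))

/-- Isomorphism of multigraphs: bijections on vertices and edges preserving the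
(unordered) endpoints, and preserving circle edges. -/
def IsIsoGraph (G G' : MGraph) : Prop :=
  ∃ (σ : Fin G.n ≃ Fin G'.n) (τ : Fin G.m ≃ Fin G'.m),
    ∀ e, G'.ends (τ e) = Option.map (Prod.map σ σ) (G.ends e) ∨
         G'.ends (τ e) = Option.map (fun p => (σ p.2, σ p.1)) (G.ends e)

/-- A graph parameter: a complex-valued graph invariant. -/
def IsGraphParameter (f : MGraph → ℂ) : Prop :=
  ∀ G G', IsIsoGraph G G' → f G = f G'

/-- The adjacency matrix: `A v w` is the number of edges between `v ≠ w`, and `A v v`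
is twice the number of loops at `v`. -/
noncomputable def adjMatrix (G : MGraph) : Matrix (Fin G.n) (Fin G.n) ℂ := fun v w =>
  (((Finset.univ.filter fun e => G.ends e = some (v, w)).card +
    (Finset.univ.filter fun e => G.ends e = some (w, v)).card : ℕ) : ℂ)

/-- The characteristic polynomial `det (t·I - A)` of a graph, evaluated at `t`. -/
noncomputable def charPolyAt (G : MGraph) (t : ℂ) : ℂ :=
  Matrix.det (t • (1 : Matrix (Fin G.n) (Fin G.n) ℂ) - adjMatrix G)

/-! ### Ordinary partition functions

A `k`-colour edge colouring model is a linear functional on the symmetric algebra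
`S V_k`; since `V_k` has basis `e_1, …, e_k` we realise `S V_k` as the polynomial
algebra `MvPolynomial (Fin k) ℂ`, with `e_i = X i` and `⊙ = *`. -/
noncomputable def ordPF (k : ℕ) (h : MvPolynomial (Fin k) ℂ →ₗ[ℂ] ℂ) (G : MGraph) : ℂ :=
  ∑ ψ : Fin G.m → Fin k, ∏ v : Fin G.n,
    h (∏ d : {d : Fin G.m × Bool // dartVertex G d = some v}, MvPolynomial.X (ψ d.val.1))

/-! ### The exterior side -/

/-- The basis vector `f_i` of `V_{2ℓ}` inside the exterior algebra `⋀ V_{2ℓ}`. -/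
noncomputable def fvec (l : ℕ) (i : Fin (2 * l)) : ExteriorAlgebra ℂ (Fin (2 * l) → ℂ) :=
  ExteriorAlgebra.ι ℂ (Pi.single i 1)

/-- `g_i = -f_{i+ℓ}` for `i ≤ ℓ` and `g_i = f_{i-ℓ}` for `i > ℓ` (0-indexed). -/
noncomputable def gvec (l : ℕ) (i : Fin (2 * l)) : ExteriorAlgebra ℂ (Fin (2 * l) → ℂ) :=
  if h : (i : ℕ) < l then -fvec l ⟨(i : ℕ) + l, by omega⟩
  else fvec l ⟨(i : ℕ) - l, by have := i.isLt; omega⟩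

/-! ### Eulerian orientations, local pairings, circuits -/

/-- The darts of `F` that are incoming under the orientation `ω` (the orientation `ω e = true`
directs the edge `e` from its first listed endpoint towards the second). -/
def inDartSet (G : MGraph) (F : Finset (Fin G.m)) (ω : Fin G.m → Bool) :
    Set (Fin G.m × Bool) := {d | d.1 ∈ F ∧ ω d.1 = d.2}

/-- The darts of `F` that are outgoing under `ω`. -/
def outDartSet (G : MGraph) (F : Finset (Fin G.m)) (ω : Fin G.m → Bool) :
    Set (Fin G.m × Bool) := {d | d.1 ∈ F ∧ ω d.1 ≠ d.2}

/-- `κ` is a local pairing of `(V,F)` compatible with the orientation `ω`: at each vertex it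
matches the incoming darts bijectively with the outgoing darts (so `ω` is in particular an
Eulerian orientation), and on a circle edge it simply pairs its two ends together. -/
structure Compatible (G : MGraph) (F : Finset (Fin G.m)) (ω : Fin G.m → Bool)
    (κ : Fin G.m × Bool → Fin G.m × Bool) : Prop where
  bij : Set.BijOn κ (inDartSet G F ω) (outDartSet G F ω)
  vert : ∀ d ∈ inDartSet G F ω, dartVertex G (κ d) = dartVertex G d
  circ : ∀ d ∈ inDartSet G F ω, G.ends d.1 = none → κ d = flipDart G d

/-- Following the circuit structure: an incoming dart moves to its κ-partner, an outgoing
dart moves along its edge to the opposite end. -/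
def nextDart (G : MGraph) (ω : Fin G.m → Bool) (κ : Fin G.m × Bool → Fin G.m × Bool)
    (d : Fin G.m × Bool) : Fin G.m × Bool :=
  if ω d.1 = d.2 then κ d else flipDart G d

/-- `c(κ)`: the number of circuits into which `κ` decomposes `F`, i.e. the number of orbits
of `nextDart` on the darts of `F`. -/
noncomputable def circuitCount (G : MGraph) (F : Finset (Fin G.m)) (ω : Fin G.m → Bool)
    (κ : Fin G.m × Bool → Fin G.m × Bool) : ℕ :=
  Nat.card (Quotient (Relation.EqvGen.setoid
    fun d d' : {a : Fin G.m × Bool // a.1 ∈ F} =>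
      (d' : Fin G.m × Bool) = nextDart G ω κ d))

/-! ### Mixed partition functions -/

/-- `⊙_{a ∈ δ_{E∖F}(v)} e_{ψ(a)}`: the symmetric monomial at `v` given the colouring `ψ`
of the edges outside `F` (loops contribute twice). -/
noncomputable def symAt (k : ℕ) (G : MGraph) (F : Finset (Fin G.m)) (v : Fin G.n)
    (ψ : {e : Fin G.m // e ∉ F} → Fin k) : MvPolynomial (Fin k) ℂ :=
  ∏ d : {d : Fin G.m × Bool // d.1 ∉ F ∧ dartVertex G d = some v},
    MvPolynomial.X (ψ ⟨d.val.1, d.prop.1⟩)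

/-- A canonical listing of all darts. -/
def allDarts (G : MGraph) : List (Fin G.m × Bool) :=
  (List.finRange G.m).flatMap fun e => [(e, false), (e, true)]

/-- `⋀_{(a₁,a₂) ∈ κ_v} f_{φ(a₁)} ∧ g_{φ(a₂)}`: the wedge at `v` of the paired darts of `F`,
given the colouring `φ` of the edges of `F`.  (The factors have even degree, so the order
of the product is irrelevant; we use a fixed canonical order.) -/
noncomputable def wedgeAt (l : ℕ) (G : MGraph) (F : Finset (Fin G.m)) (ω : Fin G.m → Bool)
    (κ : Fin G.m × Bool → Fin G.m × Bool) (v : Fin G.n)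
    (φ : {e : Fin G.m // e ∈ F} → Fin (2 * l)) : ExteriorAlgebra ℂ (Fin (2 * l) → ℂ) :=
  (((allDarts G).filter fun d =>
      decide (d.1 ∈ F ∧ ω d.1 = d.2 ∧ dartVertex G d = some v)).map fun d =>
    (if h : d.1 ∈ F then fvec l (φ ⟨d.1, h⟩) else 0) *
    (if h : (κ d).1 ∈ F then gvec l (φ ⟨(κ d).1, h⟩) else 0)).prod

/-- `s_h(G,F,ω,κ)` for a `(k,2ℓ)`-colour edge colouring model
`h ∈ (S V_k ⊗ ⋀ V_{2ℓ})^*`. -/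
noncomputable def sPart (k l : ℕ) (G : MGraph)
    (h : MvPolynomial (Fin k) ℂ ⊗[ℂ] ExteriorAlgebra ℂ (Fin (2 * l) → ℂ) →ₗ[ℂ] ℂ)
    (F : Finset (Fin G.m)) (ω : Fin G.m → Bool)
    (κ : Fin G.m × Bool → Fin G.m × Bool) : ℂ :=
  (-1 : ℂ) ^ circuitCount G F ω κ *
    ∑ φ : {e : Fin G.m // e ∈ F} → Fin (2 * l),
      ∑ ψ : {e : Fin G.m // e ∉ F} → Fin k,
        ∏ v : Fin G.n, h (symAt k G F v ψ ⊗ₜ[ℂ] wedgeAt l G F ω κ v φ)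

open Classical in
/-- `s_h(G,F)`: the common value of `s_h(G,F,ω,κ)` over all Eulerian orientations `ω` of
`(V,F)` with compatible local pairings `κ` (such a pair exists iff `F` is Eulerian; the
value is independent of the choice, and we take `0` if no such pair exists). -/
noncomputable def sEuler (k l : ℕ) (G : MGraph)
    (h : MvPolynomial (Fin k) ℂ ⊗[ℂ] ExteriorAlgebra ℂ (Fin (2 * l) → ℂ) →ₗ[ℂ] ℂ)
    (F : Finset (Fin G.m)) : ℂ :=
  if hc : ∃ p : (Fin G.m → Bool) × (Fin G.m × Bool → Fin G.m × Bool),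
      Compatible G F p.1 p.2
  then sPart k l G h F hc.choose.1 hc.choose.2
  else 0

/-- The mixed partition function `p_h(G) = ∑_{F ⊆ E Eulerian} s_h(G,F)`. -/
noncomputable def mixedPF (k l : ℕ)
    (h : MvPolynomial (Fin k) ℂ ⊗[ℂ] ExteriorAlgebra ℂ (Fin (2 * l) → ℂ) →ₗ[ℂ] ℂ)
    (G : MGraph) : ℂ :=
  ∑ F : Finset (Fin G.m), sEuler k l G h F

/-! ### Skew partition functions (vertex-dependent models `h^v ∈ (⋀ V_{2ℓ})^*`) -/

/-- `s_h(G(F),ω,κ)` for a family `h = (h^v)_{v ∈ V}` of functionals on `⋀ V_{2ℓ}`. -/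
noncomputable def skewPartAt (l : ℕ) (G : MGraph)
    (hv : Fin G.n → (ExteriorAlgebra ℂ (Fin (2 * l) → ℂ) →ₗ[ℂ] ℂ))
    (F : Finset (Fin G.m)) (ω : Fin G.m → Bool)
    (κ : Fin G.m × Bool → Fin G.m × Bool) : ℂ :=
  (-1 : ℂ) ^ circuitCount G F ω κ *
    ∑ φ : {e : Fin G.m // e ∈ F} → Fin (2 * l),
      ∏ v : Fin G.n, hv v (wedgeAt l G F ω κ v φ)

open Classical in
/-- The skew partition function `p_h(G)` of a family `h = (h^v)_{v ∈ V}`: equal to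
`s_h(G,ω,κ)` (for any Eulerian orientation `ω` with compatible pairing `κ`) if `G` is
Eulerian, and `0` otherwise. -/
noncomputable def skewPF (l : ℕ) (G : MGraph)
    (hv : Fin G.n → (ExteriorAlgebra ℂ (Fin (2 * l) → ℂ) →ₗ[ℂ] ℂ)) : ℂ :=
  if hc : ∃ p : (Fin G.m → Bool) × (Fin G.m × Bool → Fin G.m × Bool),
      Compatible G Finset.univ p.1 p.2
  then skewPartAt l G hv Finset.univ hc.choose.1 hc.choose.2
  else 0
/-! ### Fragments and edge-connection matrices -/

/-- A `t`-fragment: a graph together with `t` distinct vertices of degree one labelled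
`1, …, t`.  The edge incident with a labelled vertex is an *open end*. -/
structure Fragment (t : ℕ) where
  G : MGraph
  lab : Fin t → Fin G.n
  inj : Function.Injective lab
  deg1 : ∀ i, degreeV G (lab i) = 1

/-- The vertex of a dart of the disjoint union of the two underlying graphs. -/
def dartVertexSum {t : ℕ} (F₁ F₂ : Fragment t) :
    (Fin F₁.G.m ⊕ Fin F₂.G.m) × Bool → Option (Fin F₁.G.n ⊕ Fin F₂.G.n)
  | (Sum.inl e, b) => (dartVertex F₁.G (e, b)).map Sum.inl
  | (Sum.inr e, b) => (dartVertex F₂.G (e, b)).map Sum.inr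

/-- Is the edge `e` (of the disjoint union) incident with the vertex labelled `i`? -/
def incLabel {t : ℕ} (F₁ F₂ : Fragment t) (i : Fin t) :
    Fin F₁.G.m ⊕ Fin F₂.G.m → Prop
  | Sum.inl e => ∃ b, dartVertex F₁.G (e, b) = some (F₁.lab i)
  | Sum.inr e => ∃ b, dartVertex F₂.G (e, b) = some (F₂.lab i)

/-- Edges of the disjoint union that get glued into a single edge of `F₁ * F₂`: the
equivalence generated by sharing a label. -/
def glueSetoid {t : ℕ} (F₁ F₂ : Fragment t) : Setoid (Fin F₁.G.m ⊕ Fin F₂.G.m) :=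
  Relation.EqvGen.setoid fun e e' => ∃ i, incLabel F₁ F₂ i e ∧ incLabel F₁ F₂ i e'

/-- The unlabelled vertices of the two fragments: the vertex set of `F₁ * F₂`. -/
def UnlabVert {t : ℕ} (F₁ F₂ : Fragment t) : Type :=
  {v : Fin F₁.G.n // v ∉ Set.range F₁.lab} ⊕ {v : Fin F₂.G.n // v ∉ Set.range F₂.lab}

instance {t : ℕ} (F₁ F₂ : Fragment t) : Finite (UnlabVert F₁ F₂) := by
  unfold UnlabVert; infer_instance

open Classical in
/-- The unlabelled vertex at which a dart of the disjoint union sits, if any. -/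
noncomputable def freeVert {t : ℕ} (F₁ F₂ : Fragment t)
    (d : (Fin F₁.G.m ⊕ Fin F₂.G.m) × Bool) : Option (UnlabVert F₁ F₂) :=
  match dartVertexSum F₁ F₂ d with
  | none => none
  | some (Sum.inl v) =>
      if h : v ∈ Set.range F₁.lab then none else some (Sum.inl ⟨v, h⟩)
  | some (Sum.inr v) =>
      if h : v ∈ Set.range F₂.lab then none else some (Sum.inr ⟨v, h⟩)

open Classical in
/-- The gluing `F₁ * F₂` of two `t`-fragments: for each label `i` the two labelled
degree-one vertices are deleted and their two open ends are glued into one edge;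
maximal chains of glued edges become single edges, and closed chains become circles. -/
noncomputable def glueFrag {t : ℕ} (F₁ F₂ : Fragment t) : MGraph := by
  letI : Fintype (Quotient (glueSetoid F₁ F₂)) := Fintype.ofFinite _
  letI : Fintype (UnlabVert F₁ F₂) := Fintype.ofFinite _
  refine
    { n := Fintype.card (UnlabVert F₁ F₂)
      m := Fintype.card (Quotient (glueSetoid F₁ F₂))
      ends := fun q => ?_ }
  let eQ := Fintype.equivFin (Quotient (glueSetoid F₁ F₂))
  let eW := Fintype.equivFin (UnlabVert F₁ F₂)
  let L : List ((Fin F₁.G.m ⊕ Fin F₂.G.m) × Bool) :=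
    (((List.finRange F₁.G.m).map Sum.inl ++ (List.finRange F₂.G.m).map Sum.inr).flatMap
      fun e => [(e, false), (e, true)])
  -- the darts of the class `q` sitting at unlabelled vertices, in canonical order
  let free := L.filter fun d =>
    decide (eQ (Quotient.mk (glueSetoid F₁ F₂) d.1) = q) && (freeVert F₁ F₂ d).isSome
  exact
    match free with
    | d₁ :: d₂ :: _ =>
        match freeVert F₁ F₂ d₁, freeVert F₁ F₂ d₂ with
        | some a, some b => some (eW a, eW b)
        | _, _ => none
    | _ => none

/-- The `t`-th edge-connection matrix `M_{f,t}` of a graph parameter `f`: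
`M_{f,t}(F₁, F₂) = f(F₁ * F₂)`. -/
noncomputable def connMatrix (f : MGraph → ℂ) (t : ℕ) :
    Fragment t → Fragment t → ℂ :=
  fun F₁ F₂ => f (glueFrag F₁ F₂)

/-- The rank of the (infinite) matrix `M_{f,t}`: the dimension of the span of its rows. -/
noncomputable def connRank (f : MGraph → ℂ) (t : ℕ) : Cardinal :=
  Module.rank ℂ (Submodule.span ℂ (Set.range (connMatrix f t)))
/-! ### The circuit partition polynomial

A partition of the edge set of a graph into circuits (closed walks with distinct edges,
up to rotation and reversal) is the same thing as a *transition system*: at every vertex,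
a partition of the incident edge-ends into unordered pairs (consecutive edges of the
circuits), encoded as a fixed-point-free involution `κ` of the darts preserving the
vertices; the two ends of a circle edge are paired with each other. -/
def IsTransition (G : MGraph) (κ : Fin G.m × Bool → Fin G.m × Bool) : Prop :=
  (∀ d, κ (κ d) = d) ∧ (∀ d, κ d ≠ d) ∧
  (∀ d, dartVertex G (κ d) = dartVertex G d) ∧
  (∀ d, G.ends d.1 = none → κ d = flipDart G d)

/-- The number of circuits of the circuit partition corresponding to the transition
system `κ`: the walk step `d ↦ flip (κ d)` has two orbits (the two directions of travel)
per circuit. -/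
noncomputable def tsCircuitCount (G : MGraph) (κ : Fin G.m × Bool → Fin G.m × Bool) : ℕ :=
  Nat.card (Quotient (Relation.EqvGen.setoid
    fun d d' : Fin G.m × Bool => d' = flipDart G (κ d))) / 2

open Classical in
/-- The circuit partition polynomial `J(G,x) = ∑_{C ∈ 𝒞(G)} x^{|C|}`, the sum being over
all partitions `C` of the edge set of `G` into circuits (equivalently, over all
transition systems). -/
noncomputable def circuitPartPoly (G : MGraph) (x : ℂ) : ℂ :=
  ∑ κ : {κ : Fin G.m × Bool → Fin G.m × Bool // IsTransition G κ},
    x ^ tsCircuitCount G κ.val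

/-- `ddf α = (α-1)!!` with the convention `(2d-1)!! = (2d-1)(2d-3)⋯3⋅1`, `(-1)!! = 1`
and `(2d)!! = 0`; that is, `ddf α` is `(α-1)(α-3)⋯3⋅1` for even `α` and `0` for odd `α`. -/
def ddf : ℕ → ℕ
  | 0 => 1
  | 1 => 0
  | (n + 2) => (n + 1) * ddf n

/-! ### Cycles and their adjacency matrices -/

/-- The adjacency matrix of the cycle graph `C_n` (for `n ≥ 3`): vertices `0, …, n-1`,
with an edge between consecutive vertices modulo `n`. -/
def cycAdj (n : ℕ) : Matrix (Fin n) (Fin n) ℝ := fun i j =>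
  if (j : ℕ) = ((i : ℕ) + 1) % n ∨ (i : ℕ) = ((j : ℕ) + 1) % n then 1 else 0

/-! ### Directed perfect matchings -/

/-- A directed perfect matching on `[2m]`: a set of arcs (ordered pairs of distinct
elements) such that every element is the head or the tail of exactly one arc. -/
def IsDirPM (m : ℕ) (M : Finset (Fin (2 * m) × Fin (2 * m))) : Prop :=
  (∀ a ∈ M, a.1 ≠ a.2) ∧
  ∀ v : Fin (2 * m), ∃! a, a ∈ M ∧ (a.1 = v ∨ a.2 = v)

/-- The number of connected components of the digraph `([2m], M ∪ N)`. -/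
noncomputable def compCount (m : ℕ) (M N : Finset (Fin (2 * m) × Fin (2 * m))) : ℕ :=
  Nat.card (Quotient (Relation.EqvGen.setoid fun v w : Fin (2 * m) =>
    ∃ a, (a ∈ M ∨ a ∈ N) ∧ ((a.1 = v ∧ a.2 = w) ∨ (a.1 = w ∧ a.2 = v))))

open Classical in
/-- Reversing the arcs of the sub-multiset `S` of the arc multiset `A` turns `A` into an
Eulerian digraph (in-degree = out-degree at every vertex). -/
def ReversalEulerizes (m : ℕ) (A S : Multiset (Fin (2 * m) × Fin (2 * m))) : Prop :=
  ∀ v : Fin (2 * m),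
    Multiset.countP (fun a => a.1 = v) ((A - S) + S.map Prod.swap) =
    Multiset.countP (fun a => a.2 = v) ((A - S) + S.map Prod.swap)

/-!
On the cycle `C_n` the partition function of `h` is `tr (Mⁿ)`, where `M i j = h (e_i e_j)`.
The loop gives `tr M = p(C_1; 0) = -2`. When `4 ∣ n`, the vector `u ↦ iᵘ` lies in the kernel of
the adjacency matrix of `C_n`, so `tr (M^(4m)) = p(C_{4m}; 0) = 0` for all `m ≥ 1`. Over `ℂ`,
traces of all positive powers vanish only for nilpotent matrices (the power sums of the
eigenvalues, weighted by their multiplicities, determine the nonzero eigenvalues); so `M⁴`,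
hence `M`, is nilpotent and `tr M = 0`, a contradiction.
-/

open Module

lemma eq_zero_of_forall_sum_mul_pow_eq_zero {R : Type*} [CommRing R] [IsDomain R]
    (s : Finset R) (c : R → R) (h : ∀ m : ℕ, ∑ x ∈ s, c x * x ^ m = 0) : ∀ x ∈ s, c x = 0 := by
  have hli := (linearIndependent_monoidHom (Multiplicative ℕ) R).comp _ (powersHom R).injective
  refine linearIndependent_iff'.mp hli s c (funext fun m => ?_)
  simpa [Finset.sum_apply, powersHom_apply] using h m.toAdd

namespace Module.End

variable {K V : Type*} [Field K] [AddCommGroup V] [Module K V] [FiniteDimensional K V]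

lemma trace_restrict_pow_maxGenEigenspace (f : End K V) (μ : K) (m : ℕ)
    (hm : Set.MapsTo (f ^ m) (f.maxGenEigenspace μ) (f.maxGenEigenspace μ)) :
    LinearMap.trace K _ ((f ^ m).restrict hm) = μ ^ m * finrank K (f.maxGenEigenspace μ) := by
  have hf := f.mapsTo_maxGenEigenspace_of_comm (Commute.refl f) μ
  rw [show (f ^ m).restrict hm = f.restrict hf ^ m from (pow_restrict m hf).symm]
  induction m with
  | zero => simp
  | succ m ih =>
    rw [pow_succ, mul_eq_comp, LinearMap.trace_comp_eq_mul_of_commute_of_isNilpotent μ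
      ((Commute.refl _).pow_left m) (f.isNilpotent_restrict_maxGenEigenspace_sub_algebraMap μ),
      ih (f.mapsTo_maxGenEigenspace_of_comm ((Commute.refl f).pow_right m) μ), pow_succ]
    ring

lemma isNilpotent_of_forall_trace_pow_eq_zero [IsAlgClosed K] [CharZero K] (f : End K V)
    (h : ∀ m, 0 < m → LinearMap.trace K V (f ^ m) = 0) : IsNilpotent f := by
  classical
  set N := f.maxGenEigenspace
  have hfin : {μ | N μ ≠ ⊥}.Finite :=
    WellFoundedGT.finite_ne_bot_of_iSupIndep f.independent_maxGenEigenspace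
  have hN : DirectSum.IsInternal N :=
    DirectSum.isInternal_submodule_of_iSupIndep_of_iSup_eq_top f.independent_maxGenEigenspace
      f.iSup_maxGenEigenspace_eq_top
  have hpow_sum : ∀ m : ℕ, ∑ μ ∈ hfin.toFinset, (μ * finrank K (N μ)) * μ ^ m = 0 := fun m => by
    have hmap := fun μ => f.mapsTo_maxGenEigenspace_of_comm ((Commute.refl f).pow_right (m + 1)) μ
    rw [← h (m + 1) m.succ_pos, LinearMap.trace_eq_sum_trace_restrict' hN hfin hmap]
    refine Finset.sum_congr rfl fun μ _ => ?_
    rw [trace_restrict_pow_maxGenEigenspace]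
    ring
  have hbot : ∀ μ ≠ 0, N μ = ⊥ := fun μ hμ => by
    by_contra hne
    simpa [hμ, hne, Submodule.finrank_eq_zero] using
      eq_zero_of_forall_sum_mul_pow_eq_zero _ _ hpow_sum μ (hfin.mem_toFinset.mpr hne)
  have htop : N 0 = ⊤ := by
    rw [eq_top_iff, ← f.iSup_maxGenEigenspace_eq_top]
    refine iSup_le fun μ => ?_
    rcases eq_or_ne μ 0 with rfl | hμ
    · exact le_rfl
    · exact (hbot μ hμ).trans_le bot_le
  refine ((LinearMap.charpoly_nilpotent_tfae f).out 2 0).mp fun x => ?_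
  have hx : x ∈ N 0 := htop ▸ Submodule.mem_top
  obtain ⟨n, hn⟩ := (mem_maxGenEigenspace f 0 x).mp hx
  exact ⟨n, by simpa using hn⟩

end Module.End

namespace Matrix

variable {ι R : Type*} [Fintype ι] [DecidableEq ι] [CommSemiring R]

lemma pow_succ_apply_eq_sum_prod (B : Matrix ι ι R) (n : ℕ) (i j : ι) :
    (B ^ (n + 1)) i j =
      ∑ ψ : Fin n → ι,
        ∏ t, B ((Fin.cons i ψ : Fin (n + 1) → ι) t) ((Fin.snoc ψ j : Fin (n + 1) → ι) t) := by
  induction n generalizing j with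
  | zero => simp [Fin.snoc]
  | succ n ih =>
    rw [pow_succ, mul_apply, ← (Fin.snocEquiv fun _ => ι).sum_comp, Fintype.sum_prod_type]
    simp_rw [ih, Finset.sum_mul]
    refine Finset.sum_congr rfl fun x _ => Finset.sum_congr rfl fun ψ _ => ?_
    simp [Fin.prod_univ_castSucc, Fin.snocEquiv, Fin.cons_snoc_eq_snoc_cons]

lemma trace_pow_succ_eq_sum_prod (B : Matrix ι ι R) (n : ℕ) :
    (B ^ (n + 1)).trace = ∑ φ : Fin (n + 1) → ι, ∏ t, B (φ t) (φ (t + 1)) := by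
  rw [trace, ← (Fin.consEquiv fun _ => ι).sum_comp, Fintype.sum_prod_type]
  simp_rw [diag_apply, pow_succ_apply_eq_sum_prod, Fin.snoc_eq_cons_rotate, finRotate_apply]
  rfl

lemma isNilpotent_of_forall_trace_pow_eq_zero {K n : Type*} [Field K] [IsAlgClosed K]
    [CharZero K] [Fintype n] [DecidableEq n] (B : Matrix n n K)
    (h : ∀ m, 0 < m → (B ^ m).trace = 0) : IsNilpotent B := by
  rw [← IsNilpotent.map_iff (toLinAlgEquiv' (R := K) (n := n)).injective]
  refine Module.End.isNilpotent_of_forall_trace_pow_eq_zero _ fun m hm => ?_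
  rw [← map_pow]
  exact (trace_toLin'_eq _).trans (h m hm)

end Matrix

/-- `cycle n` is `C_{n+1}`; `cycle 0` is a single loop. -/
abbrev MGraph.cycle (n : ℕ) : MGraph := ⟨n + 1, n + 1, fun e => some (e, e + 1)⟩

namespace MGraph

variable {n : ℕ}

lemma dartVertex_cycle_eq_some_iff (d : Fin (n + 1) × Bool) (v : Fin (n + 1)) :
    dartVertex (cycle n) d = some v ↔ d = (v - 1, true) ∨ d = (v, false) := by
  obtain ⟨e, _ | _⟩ := d <;> simp [dartVertex, eq_sub_iff_add_eq]

lemma prod_darts_cycle {M : Type*} [CommMonoid M] (f : Fin (n + 1) × Bool → M) (v : Fin (n + 1)) :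
    ∏ d : {d // dartVertex (cycle n) d = some v}, f d = f (v - 1, true) * f (v, false) := by
  rw [← Finset.prod_subtype {(v - 1, true), (v, false)} (fun d => by
    rw [dartVertex_cycle_eq_some_iff]; simp)]
  exact Finset.prod_pair (by simp)

lemma adjMatrix_cycle (v w : Fin (n + 1)) :
    adjMatrix (cycle n) v w = (if w = v + 1 then 1 else 0) + (if v = w + 1 then 1 else 0) := by
  have hcard : ∀ a b : Fin (n + 1),
      (Finset.univ.filter fun e => (cycle n).ends e = some (a, b)).card =
        if b = a + 1 then 1 else 0 := fun a b => by
    split_ifs with hb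
    · subst hb
      exact Finset.card_eq_one.mpr ⟨a, by ext; simp [Prod.ext_iff]⟩
    · refine Finset.card_eq_zero.mpr (Finset.filter_eq_empty_iff.mpr fun e _ he => hb ?_)
      simp only [Option.some.injEq, Prod.ext_iff] at he
      rw [← he.1, he.2]
  simp only [adjMatrix, hcard]
  push_cast
  rfl

lemma charPolyAt_cycle_zero : charPolyAt (cycle 0) 0 = -2 := by
  rw [charPolyAt, zero_smul, zero_sub, Matrix.det_fin_one, Matrix.neg_apply, adjMatrix_cycle]
  norm_num

lemma adjMatrix_cycle_mulVec_pow {ζ : ℂ} (hζ : ζ ^ (n + 1) = 1) :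
    (adjMatrix (cycle n)).mulVec (fun u : Fin (n + 1) => ζ ^ (u : ℕ)) =
      (ζ + ζ ^ n) • fun u : Fin (n + 1) => ζ ^ (u : ℕ) := by
  set x : Fin (n + 1) → ℂ := fun u => ζ ^ (u : ℕ)
  have hsucc : ∀ u, x (u + 1) = x u * ζ := fun u => by
    simp only [x, Fin.val_add_one]
    split_ifs with hu
    · rw [hu, Fin.val_last, ← pow_succ, hζ, pow_zero]
    · rw [pow_succ]
  have hpred : ∀ u, x (u - 1) = x u * ζ ^ n := fun u => by
    rw [← sub_add_cancel u 1, hsucc, add_sub_cancel_right, mul_assoc, ← pow_succ', hζ, mul_one]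
  ext v
  have hiff : ∀ w : Fin (n + 1), v = w + 1 ↔ w = v - 1 := fun w => by
    rw [eq_sub_iff_add_eq, eq_comm]
  simp only [Matrix.mulVec, dotProduct, adjMatrix_cycle, add_mul, ite_mul, one_mul, zero_mul,
    Finset.sum_add_distrib, hiff, Finset.sum_ite_eq', Finset.mem_univ, if_true, hsucc, hpred,
    Pi.smul_apply, smul_eq_mul]
  ring

lemma charPolyAt_cycle_eq_zero (h4 : 4 ∣ n + 1) : charPolyAt (cycle n) 0 = 0 := by
  have hI : Complex.I ^ (n + 1) = 1 := by
    obtain ⟨c, hc⟩ := h4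
    rw [hc, pow_mul, Complex.I_pow_four, one_pow]
  have hsum : Complex.I + Complex.I ^ n = 0 := by
    refine (mul_eq_zero.mp ?_).resolve_left Complex.I_ne_zero
    rw [mul_add, ← pow_succ', hI, Complex.I_mul_I]
    ring
  have hdet : (adjMatrix (cycle n)).det = 0 := Matrix.exists_mulVec_eq_zero_iff.mp
    ⟨fun u => Complex.I ^ (u : ℕ), fun h0 => by simpa using congrFun h0 0,
      by rw [adjMatrix_cycle_mulVec_pow hI, hsum, zero_smul]⟩
  rw [charPolyAt, zero_smul, zero_sub, Matrix.det_neg, hdet, mul_zero]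

end MGraph

open MGraph MvPolynomial

noncomputable def edgeMatrix {k : ℕ} (h : MvPolynomial (Fin k) ℂ →ₗ[ℂ] ℂ) :
    Matrix (Fin k) (Fin k) ℂ :=
  Matrix.of fun i j => h (X i * X j)

lemma ordPF_cycle {k : ℕ} (h : MvPolynomial (Fin k) ℂ →ₗ[ℂ] ℂ) (n : ℕ) :
    ordPF k h (cycle n) = (edgeMatrix h ^ (n + 1)).trace := by
  rw [Matrix.trace_pow_succ_eq_sum_prod]
  refine Fintype.sum_congr _ _ fun ψ => ?_
  rw [← Equiv.prod_comp (Equiv.addRight (1 : Fin (n + 1)))]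
  refine Fintype.prod_congr _ _ fun v => ?_
  rw [Equiv.coe_addRight, prod_darts_cycle (fun d => X (ψ d.1)), add_sub_cancel_right]
  rfl

/-- **Proposition.** There is no `k ∈ ℕ` and `k`-colour edge colouring model
`h ∈ (S V_k)^*` whose partition function equals the evaluation of the characteristic
polynomial at `0`, i.e. with `p_h(G) = p(G;0)` for all graphs `G` (graphs here have no
circle component). -/
theorem no_ecm_charPoly_zero :
    ¬ ∃ (k : ℕ) (h : MvPolynomial (Fin k) ℂ →ₗ[ℂ] ℂ),
        ∀ G : MGraph, (∀ e, G.ends e ≠ none) → ordPF k h G = charPolyAt G 0 := by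
  rintro ⟨k, h, hG⟩
  have htrace : ∀ n, (edgeMatrix h ^ (n + 1)).trace = charPolyAt (cycle n) 0 := fun n => by
    rw [← ordPF_cycle]
    exact hG _ fun _ => Option.some_ne_none _
  have hnil : IsNilpotent (edgeMatrix h ^ 4) :=
    Matrix.isNilpotent_of_forall_trace_pow_eq_zero _ fun m hm => by
      obtain ⟨n, hn⟩ : ∃ n, 4 * m = n + 1 := ⟨4 * m - 1, by omega⟩
      rw [← pow_mul, hn, htrace, charPolyAt_cycle_eq_zero (hn ▸ dvd_mul_right 4 m)]
  have htr := (Matrix.isNilpotent_trace_of_isNilpotent hnil.of_pow).eq_zero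
  rw [← pow_one (edgeMatrix h), htrace, charPolyAt_cycle_zero] at htr
  norm_num at htr
end

section
/- Let k ∈ ℕ. For a permutation π ∈ S_{k+1} whose disjoint cycle decomposition has cycles of lengths n_1,…,n_t (fixed points counted as cycles of length 1), let D(π) = Π_{i=1}^t det(A(C_{6 n_i})), where A(C_n) is the adjacency matrix of the cycle graph on n vertices. Then Σ_{π ∈ S_{k+1}} sgn(π) · D(π) ≠ 0. -/
/-!
Let `P` be the permutation matrix of the rotation `x ↦ x + 1` of `Fin n`. For `n ≥ 3` the
adjacency matrix of `C_n` is `P + Pᵀ`, so `P (P + Pᵀ) = P² + 1 = (P + i) (P - i)` over `ℂ`.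
In the Leibniz expansion of `det (a + P)` only the identity and the inverse rotation contribute,
giving `aⁿ - (-1)ⁿ`; hence `det A(C_{2m}) = -(1 - (-1)ᵐ)²`, which is `≤ 0` and equals `-4`
for `m = 3`.

Counting fixed points as cycles of length `1`, the cycle lengths of `π ∈ S_{k+1}` form a
partition of `k + 1`, and `sgn π = ∏ -(-1)^c`. So the term of `π` equals
`(-1)^(k+1) ∏ -det A(C_{6c})`: every term has the sign of `(-1)^(k+1)` and the identity
contributes `(-1)^(k+1) 4^(k+1) ≠ 0`.
-/

open Matrix Equiv Equiv.Perm Complex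

open Fin.NatCast in
theorem eq_one_or_eq_finRotate_inv_of_forall_eq_or_add_one_eq {n : ℕ} {σ : Perm (Fin (n + 1))}
    (h : ∀ i, σ i = i ∨ σ i + 1 = i) : σ = 1 ∨ σ = (finRotate (n + 1))⁻¹ := by
  by_cases hfix : ∃ i, σ i = i
  · obtain ⟨i₀, hi₀⟩ := hfix
    have hshift : ∀ j : ℕ, σ (i₀ + (j : Fin (n + 1))) = i₀ + j := by
      intro j
      induction j with
      | zero => simpa using hi₀
      | succ j ih =>
        rw [Nat.cast_succ, ← add_assoc]
        refine (h _).elim id fun hj => ?_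
        have hσ : σ (i₀ + j + 1) = σ (i₀ + j) := by rw [ih]; exact add_right_cancel hj
        rw [hσ, ih, σ.injective hσ]
    left
    ext j
    simpa using congrArg Fin.val (hshift (j - i₀).val)
  · push Not at hfix
    right
    refine eq_inv_of_mul_eq_one_left (Equiv.ext fun i => ?_)
    simpa [finRotate_apply] using (h (i + 1)).resolve_left (hfix _)

theorem det_smul_one_add_permMatrix_finRotate {R : Type*} [CommRing R] (n : ℕ) (a : R) :
    det (a • 1 + (finRotate (n + 2)).permMatrix R) = a ^ (n + 2) - (-1) ^ (n + 2) := by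
  have hne : ∀ i : Fin (n + 2), i + 1 ≠ i := fun i h => by simpa using congrArg (· - i) h
  have hrot : (1 : Perm (Fin (n + 2))) ≠ (finRotate (n + 2))⁻¹ := by
    rw [ne_comm, Ne, inv_eq_one]
    exact isCycle_finRotate.ne_one
  rw [det_apply, ← Finset.sum_subset (Finset.subset_univ {1, (finRotate (n + 2))⁻¹}),
    Finset.sum_pair hrot]
  · simp [hne, sign_finRotate, Units.smul_def]
    ring
  · intro σ _ hσ
    obtain ⟨i, hfix, hshift⟩ : ∃ i, σ i ≠ i ∧ σ i + 1 ≠ i := by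
      by_contra! h
      simp only [Finset.mem_insert, Finset.mem_singleton, not_or] at hσ
      exact (eq_one_or_eq_finRotate_inv_of_forall_eq_or_add_one_eq
        fun i => or_iff_not_imp_left.2 (h i)).elim hσ.1 hσ.2
    refine smul_eq_zero_of_right _ (Finset.prod_eq_zero (Finset.mem_univ i) ?_)
    simp [hfix, hshift]

theorem cycAdj_eq_permMatrix_add_transpose (m : ℕ) :
    cycAdj (m + 3) = (finRotate (m + 3)).permMatrix ℝ + ((finRotate (m + 3)).permMatrix ℝ)ᵀ := by
  ext i j
  have hsucc : ∀ x y : Fin (m + 3), (y : ℕ) = ((x : ℕ) + 1) % (m + 3) ↔ x + 1 = y := fun x y => by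
    rw [Fin.ext_iff, Fin.val_add, Fin.val_one]; exact eq_comm
  have hne : i + 1 = j → j + 1 ≠ i := by
    rintro rfl h
    have h2 : (1 + 1 : Fin (m + 3)) = 0 := add_eq_left.mp (by rwa [← add_assoc])
    rw [Fin.ext_iff, Fin.val_add, Fin.val_one, Fin.val_zero, Nat.mod_eq_of_lt (by omega)] at h2
    omega
  simp only [cycAdj, hsucc, Matrix.add_apply, Matrix.transpose_apply, PEquiv.toMatrix_apply,
    Equiv.toPEquiv_apply, Option.mem_def, Option.some.injEq, finRotate_apply]
  split_ifs <;> simp_all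

theorem ofReal_det_cycAdj_add_three (n : ℕ) :
    ((cycAdj (n + 3)).det : ℂ) =
      (-1) ^ n * ((I ^ (n + 3) - (-1) ^ (n + 3)) * ((-I) ^ (n + 3) - (-1) ^ (n + 3))) := by
  set P := (finRotate (n + 3)).permMatrix ℂ
  have hmap : (cycAdj (n + 3)).map ((↑) : ℝ → ℂ) = P + Pᵀ := by
    have hP : ((finRotate (n + 3)).permMatrix ℝ).map ((↑) : ℝ → ℂ) = P := by
      ext i j
      simp only [map_apply, P, PEquiv.toMatrix_apply]
      split_ifs <;> simp
    rw [cycAdj_eq_permMatrix_add_transpose, Matrix.map_add _ ofReal_add, transpose_map, hP]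
  have hfactor : P * (P + Pᵀ) = (I • 1 + P) * ((-I) • 1 + P) := by
    have hPPt : P * Pᵀ = 1 := by
      rw [transpose_permMatrix, ← permMatrix_mul, inv_mul_cancel, permMatrix_one]
    simp only [mul_add, add_mul, hPPt, smul_mul_assoc, mul_smul_comm, one_mul, mul_one]
    match_scalars <;> simp
  have hdet : ((cycAdj (n + 3)).det : ℂ) = ((cycAdj (n + 3)).map (↑)).det :=
    Complex.ofRealHom.map_det _
  have := congrArg det hfactor
  rw [det_mul, det_mul, ← hmap, ← hdet] at this
  rw [det_smul_one_add_permMatrix_finRotate, det_smul_one_add_permMatrix_finRotate] at this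
  have hsign : (((sign (finRotate (n + 3)) : ℤ) : ℂ)) = (-1) ^ n := by
    simp [sign_finRotate, pow_succ]
  rw [det_permutation, hsign] at this
  calc ((cycAdj (n + 3)).det : ℂ) = (-1) ^ n * ((-1) ^ n * (cycAdj (n + 3)).det) := by
        rw [← mul_assoc, ← mul_pow]; norm_num
    _ = _ := by rw [this]

theorem det_cycAdj_two_mul (m : ℕ) (hm : 2 ≤ m) : (cycAdj (2 * m)).det = -(1 - (-1) ^ m) ^ 2 := by
  obtain ⟨n, rfl⟩ := Nat.exists_eq_add_of_le' hm
  have h := ofReal_det_cycAdj_add_three (2 * n + 1)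
  rw [show 2 * n + 1 + 3 = 2 * (n + 2) by ring, pow_mul I, pow_mul (-I), pow_mul (-1 : ℂ),
    neg_one_sq, one_pow, neg_sq I, I_sq, Odd.neg_one_pow (odd_two_mul_add_one n)] at h
  exact_mod_cast (show ((cycAdj (2 * (n + 2))).det : ℂ) = ((-(1 - (-1) ^ (n + 2)) ^ 2 : ℝ) : ℂ) by
    rw [h]; push_cast; ring)

theorem Multiset.prod_map_neg_neg_one_pow_mul {R : Type*} [CommRing R] (s : Multiset ℕ)
    (f : ℕ → R) :
    (s.map fun c => -(-1) ^ c * f c).prod = (-1) ^ s.sum * (s.map fun c => -f c).prod := by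
  induction s using Multiset.induction_on with
  | empty => simp
  | cons c s ih => rw [Multiset.map_cons, Multiset.prod_cons, ih]; simp [pow_add]; ring

theorem Equiv.Perm.sign_mul_prod_cycleType_eq_prod_partition {α R : Type*} [Fintype α]
    [DecidableEq α] [CommRing R] (σ : Perm α) (f : ℕ → R) :
    ((sign σ : ℤ) : R) * ((σ.cycleType.map f).prod * f 1 ^ (Fintype.card α - σ.support.card)) =
      (-1) ^ Fintype.card α * (σ.partition.parts.map fun c => -f c).prod := by
  have hsign : ((sign σ : ℤ) : R) = (σ.cycleType.map fun c => -(-1) ^ c).prod := by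
    have h := map_multiset_prod ((Int.castRingHom R : ℤ →* R).comp (Units.coeHom ℤ))
      (σ.cycleType.map fun c => -(-1) ^ c)
    simpa [← sign_of_cycleType', Multiset.map_map, Function.comp_def] using h
  calc _ = (σ.partition.parts.map fun c => -(-1) ^ c * f c).prod := by
        rw [parts_partition, Multiset.map_add, Multiset.prod_add, Multiset.prod_map_mul, hsign]
        simp [mul_assoc]
    _ = _ := by rw [Multiset.prod_map_neg_neg_one_pow_mul, σ.partition.parts_sum]

theorem neg_det_cycAdj_six_mul (c : ℕ) (hc : 0 < c) :
    -(cycAdj (6 * c)).det = (1 - (-1) ^ c) ^ 2 := by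
  rw [show 6 * c = 2 * (3 * c) by ring, det_cycAdj_two_mul _ (by omega), neg_neg, pow_mul]
  norm_num

/-- **Key step in answering de la Harpe and Jones.** For every `k`, the signed sum over
all permutations `π ∈ S_{k+1}` of the products of the determinants of the adjacency
matrices of the cycles `C_{6 nᵢ}`, where `n₁, …, n_t` are the cycle lengths of `π`
(fixed points counting as cycles of length `1`), is non-zero. -/
theorem sum_sign_det_cycles_ne_zero (k : ℕ) :
    ∑ π : Equiv.Perm (Fin (k + 1)),
      ((Equiv.Perm.sign π : ℤ) : ℝ) *
        ((π.cycleType.map fun c => (cycAdj (6 * c)).det).prod *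
          (cycAdj 6).det ^ (k + 1 - π.support.card)) ≠ 0 := by
  have hterm : ∀ π : Perm (Fin (k + 1)), ((sign π : ℤ) : ℝ) *
      ((π.cycleType.map fun c => (cycAdj (6 * c)).det).prod *
        (cycAdj 6).det ^ (k + 1 - π.support.card)) =
      (-1) ^ (k + 1) * (π.partition.parts.map fun c => -(cycAdj (6 * c)).det).prod := fun π => by
    simpa using π.sign_mul_prod_cycleType_eq_prod_partition fun c => (cycAdj (6 * c)).det
  have hsix := neg_det_cycAdj_six_mul 1 one_pos
  norm_num at hsix
  rw [Finset.sum_congr rfl fun π _ => hterm π, ← Finset.mul_sum]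
  refine mul_ne_zero (by simp) (Finset.sum_pos' (fun π _ => Multiset.prod_nonneg fun x hx => ?_)
    ⟨1, Finset.mem_univ _, ?_⟩).ne'
  · obtain ⟨c, hc, rfl⟩ := Multiset.mem_map.1 hx
    rw [neg_det_cycAdj_six_mul c (π.partition.parts_pos hc)]
    positivity
  · simp [parts_partition, hsix]
end

section
/- For every x ∈ ℂ with x ∉ ℤ and for all k, ℓ ∈ ℕ, there is no (k,2ℓ)-color edge coloring model h ∈ (S V_k ⊗ ⋀V_{2ℓ})* whose mixed partition function satisfies p_h(G) = J(G,x) for all graphs G; that is, the circuit partition polynomial evaluated at a non-integer cannot be realized as a mixed partition function. -/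
open scoped TensorProduct

/-! ### Auxiliary lemmas for the proof -/

lemma natCard_quot_empty {α : Type*} [IsEmpty α] (s : Setoid α) :
    Nat.card (Quotient s) = 0 := by
  haveI : IsEmpty (Quotient s) := Function.isEmpty (Quotient.out : Quotient s → α)
  exact Nat.card_of_isEmpty

lemma circuitCount_empty (G : MGraph) (ω : Fin G.m → Bool)
    (κ : Fin G.m × Bool → Fin G.m × Bool) : circuitCount G ∅ ω κ = 0 := by
  haveI : IsEmpty {a : Fin G.m × Bool // a.1 ∈ (∅ : Finset (Fin G.m))} :=
    ⟨fun a => by simpa using a.2⟩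
  exact natCard_quot_empty _

lemma circle_ends (e : Fin circleGraph.m) : circleGraph.ends e = none := rfl

lemma circle_dartVertex (d : Fin circleGraph.m × Bool) :
    dartVertex circleGraph d = none := rfl

instance : IsEmpty (Fin circleGraph.n) := ⟨fun v => Fin.elim0 v⟩

lemma circle_nextDart (ω : Fin circleGraph.m → Bool)
    (κ : Fin circleGraph.m × Bool → Fin circleGraph.m × Bool)
    (hc : Compatible circleGraph Finset.univ ω κ) (d : Fin circleGraph.m × Bool) :
    nextDart circleGraph ω κ d = flipDart circleGraph d := by
  unfold nextDart
  split_ifs with hω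
  · exact hc.circ d ⟨Finset.mem_univ _, hω⟩ rfl
  · rfl

lemma circuitCount_circle_univ (ω : Fin circleGraph.m → Bool)
    (κ : Fin circleGraph.m × Bool → Fin circleGraph.m × Bool)
    (hc : Compatible circleGraph Finset.univ ω κ) :
    circuitCount circleGraph Finset.univ ω κ = 1 := by
  rw [circuitCount, Nat.card_eq_one_iff_unique]
  have hm : circleGraph.m = 1 := rfl
  have key : ∀ a b : {a : Fin circleGraph.m × Bool // a.1 ∈ (Finset.univ : Finset (Fin circleGraph.m))},
      Relation.EqvGen
        (fun d d' : {a : Fin circleGraph.m × Bool // a.1 ∈ (Finset.univ : Finset (Fin circleGraph.m))} =>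
          (d' : Fin circleGraph.m × Bool) = nextDart circleGraph ω κ d) a b := by
    rintro ⟨⟨ea, ba⟩, ha⟩ ⟨⟨eb, bb⟩, hb⟩
    have he : ea = eb := by
      have h1 := ea.isLt; have h2 := eb.isLt
      exact Fin.ext (by omega)
    subst he
    by_cases hbb : ba = bb
    · subst hbb; exact Relation.EqvGen.refl _
    · apply Relation.EqvGen.rel
      show ((ea, bb) : Fin circleGraph.m × Bool) = nextDart circleGraph ω κ (ea, ba)
      rw [circle_nextDart ω κ hc]
      have : bb = !ba := by cases ba <;> cases bb <;> simp_all
      simp [flipDart, this]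
  constructor
  · constructor
    intro a b
    induction a using Quotient.ind
    induction b using Quotient.ind
    exact Quotient.sound (key _ _)
  · refine ⟨Quotient.mk _ ⟨(⟨0, by omega⟩, false), Finset.mem_univ _⟩⟩

lemma unique_subtype_notmem_univ (G : MGraph) :
    IsEmpty {e : Fin G.m // e ∉ (Finset.univ : Finset (Fin G.m))} :=
  ⟨fun e => e.2 (Finset.mem_univ _)⟩

lemma sPart_circle_empty (k l : ℕ)
    (h : MvPolynomial (Fin k) ℂ ⊗[ℂ] ExteriorAlgebra ℂ (Fin (2 * l) → ℂ) →ₗ[ℂ] ℂ)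
    (ω : Fin circleGraph.m → Bool)
    (κ : Fin circleGraph.m × Bool → Fin circleGraph.m × Bool) :
    sPart k l circleGraph h ∅ ω κ = k := by
  rw [sPart, circuitCount_empty]
  haveI : IsEmpty {e : Fin circleGraph.m // e ∈ (∅ : Finset (Fin circleGraph.m))} :=
    ⟨fun e => absurd e.2 (Finset.notMem_empty _)⟩
  haveI : Unique {e : Fin circleGraph.m // e ∉ (∅ : Finset (Fin circleGraph.m))} := by
    have hm : circleGraph.m = 1 := rfl
    refine ⟨⟨⟨⟨0, by omega⟩, by simp⟩⟩, ?_⟩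
    rintro ⟨e, he⟩
    have h1 := e.isLt
    exact Subtype.ext (Fin.ext (by omega))
  rw [Finset.sum_congr rfl fun φ _ =>
    Finset.sum_congr rfl fun ψ _ => Finset.prod_of_isEmpty _]
  simp only [Finset.sum_const, Finset.card_univ, nsmul_eq_mul, mul_one, pow_zero, one_mul]
  rw [Fintype.card_fun, Fintype.card_fun]
  simp only [Fintype.card_of_isEmpty, Fintype.card_unique, Fintype.card_fin, pow_zero,
    pow_one, one_mul, mul_one, Nat.cast_one]

lemma sPart_circle_univ (k l : ℕ)
    (h : MvPolynomial (Fin k) ℂ ⊗[ℂ] ExteriorAlgebra ℂ (Fin (2 * l) → ℂ) →ₗ[ℂ] ℂ)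
    (ω : Fin circleGraph.m → Bool)
    (κ : Fin circleGraph.m × Bool → Fin circleGraph.m × Bool)
    (hc : Compatible circleGraph Finset.univ ω κ) :
    sPart k l circleGraph h Finset.univ ω κ = -(2 * l) := by
  rw [sPart, circuitCount_circle_univ ω κ hc]
  haveI : IsEmpty {e : Fin circleGraph.m // e ∉ (Finset.univ : Finset (Fin circleGraph.m))} :=
    unique_subtype_notmem_univ _
  haveI : Unique {e : Fin circleGraph.m // e ∈ (Finset.univ : Finset (Fin circleGraph.m))} := by
    have hm : circleGraph.m = 1 := rfl
    refine ⟨⟨⟨⟨0, by omega⟩, Finset.mem_univ _⟩⟩, ?_⟩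
    rintro ⟨e, he⟩
    have h1 := e.isLt
    exact Subtype.ext (Fin.ext (by omega))
  rw [Finset.sum_congr rfl fun φ _ =>
    Finset.sum_congr rfl fun ψ _ => Finset.prod_of_isEmpty _]
  simp only [Finset.sum_const, Finset.card_univ, nsmul_eq_mul, mul_one, pow_one]
  rw [Fintype.card_fun, Fintype.card_fun]
  simp only [Fintype.card_of_isEmpty, Fintype.card_unique, Fintype.card_fin, pow_zero,
    pow_one, one_mul, mul_one, Nat.cast_one]
  push_cast
  ring

lemma sEuler_circle_empty (k l : ℕ)
    (h : MvPolynomial (Fin k) ℂ ⊗[ℂ] ExteriorAlgebra ℂ (Fin (2 * l) → ℂ) →ₗ[ℂ] ℂ) :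
    sEuler k l circleGraph h ∅ = k := by
  have hex : ∃ p : (Fin circleGraph.m → Bool) × (Fin circleGraph.m × Bool → Fin circleGraph.m × Bool),
      Compatible circleGraph ∅ p.1 p.2 := by
    refine ⟨(fun _ => false, id), ?_, ?_, ?_⟩
    · refine ⟨fun d hd => absurd hd.1 (by simp), fun d hd b hb hh => by
        exact absurd hd.1 (by simp), fun d hd => absurd hd.1 (by simp)⟩
    · exact fun d hd => absurd hd.1 (by simp)
    · exact fun d hd => absurd hd.1 (by simp)
  rw [sEuler, dif_pos hex]
  exact sPart_circle_empty k l h _ _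

lemma sEuler_circle_univ (k l : ℕ)
    (h : MvPolynomial (Fin k) ℂ ⊗[ℂ] ExteriorAlgebra ℂ (Fin (2 * l) → ℂ) →ₗ[ℂ] ℂ) :
    sEuler k l circleGraph h Finset.univ = -(2 * l) := by
  have hex : ∃ p : (Fin circleGraph.m → Bool) × (Fin circleGraph.m × Bool → Fin circleGraph.m × Bool),
      Compatible circleGraph Finset.univ p.1 p.2 := by
    refine ⟨(fun _ => false, flipDart circleGraph), ?_, ?_, ?_⟩
    · refine ⟨?_, ?_, ?_⟩
      · rintro ⟨e, b⟩ ⟨-, hb⟩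
        refine ⟨Finset.mem_univ _, ?_⟩
        simp only at hb
        simp [flipDart, ← hb]
      · rintro ⟨e, b⟩ - ⟨e', b'⟩ - hh
        simpa [flipDart, Prod.ext_iff] using hh
      · rintro ⟨e, b⟩ ⟨-, hb⟩
        refine ⟨(e, !b), ⟨Finset.mem_univ _, ?_⟩, ?_⟩
        · simp only at hb
          cases b
          · exact absurd rfl hb
          · rfl
        · simp [flipDart]
    · exact fun d _ => by rw [circle_dartVertex, circle_dartVertex]
    · exact fun d _ _ => rfl
  rw [sEuler, dif_pos hex]
  exact sPart_circle_univ k l h _ _ hex.choose_spec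

lemma mixedPF_circle (k l : ℕ)
    (h : MvPolynomial (Fin k) ℂ ⊗[ℂ] ExteriorAlgebra ℂ (Fin (2 * l) → ℂ) →ₗ[ℂ] ℂ) :
    mixedPF k l h circleGraph = (k : ℂ) - 2 * l := by
  rw [mixedPF]
  have huniv : (Finset.univ : Finset (Finset (Fin circleGraph.m))) =
      {∅, Finset.univ} := by decide
  rw [huniv, Finset.sum_pair (by decide), sEuler_circle_empty, sEuler_circle_univ]
  ring

lemma isTransition_circle_iff (κ : Fin circleGraph.m × Bool → Fin circleGraph.m × Bool) :
    IsTransition circleGraph κ ↔ κ = flipDart circleGraph := by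
  constructor
  · intro ht
    funext d
    exact ht.2.2.2 d rfl
  · rintro rfl
    refine ⟨fun d => by simp [flipDart], fun d => by simp [flipDart, Prod.ext_iff],
      fun d => by rw [circle_dartVertex, circle_dartVertex], fun d _ => rfl⟩

lemma tsCircuitCount_circle_flip :
    tsCircuitCount circleGraph (flipDart circleGraph) = 1 := by
  rw [tsCircuitCount]
  have hinj : ∀ a b : Fin circleGraph.m × Bool,
      Relation.EqvGen (fun d d' : Fin circleGraph.m × Bool =>
        d' = flipDart circleGraph (flipDart circleGraph d)) a b → a = b := by
    intro a b hab
    induction hab with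
    | rel a b hr => simp only [flipDart, Bool.not_not] at hr; exact hr.symm
    | refl a => rfl
    | symm a b _ ih => exact ih.symm
    | trans a b c _ _ ih1 ih2 => exact ih1.trans ih2
  have hbij : Function.Bijective (Quotient.mk (Relation.EqvGen.setoid
      (fun d d' : Fin circleGraph.m × Bool => d' = flipDart circleGraph (flipDart circleGraph d)))) := by
    constructor
    · intro a b hab
      exact hinj a b (Quotient.exact hab)
    · exact Quotient.mk''_surjective
  have hcard : Nat.card (Quotient (Relation.EqvGen.setoid
      (fun d d' : Fin circleGraph.m × Bool => d' = flipDart circleGraph (flipDart circleGraph d))))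
      = Nat.card (Fin circleGraph.m × Bool) := (Nat.card_eq_of_bijective _ hbij).symm
  have hm : circleGraph.m = 1 := rfl
  have : Nat.card (Fin circleGraph.m × Bool) = 2 := by
    rw [Nat.card_eq_fintype_card, Fintype.card_prod, Fintype.card_bool, Fintype.card_fin, hm]
  -- the relation in tsCircuitCount is d' = flipDart (flipDart d) after unfolding κ
  rw [show (fun d d' : Fin circleGraph.m × Bool => d' = flipDart circleGraph ((flipDart circleGraph) d))
      = (fun d d' : Fin circleGraph.m × Bool => d' = flipDart circleGraph (flipDart circleGraph d)) from rfl]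
  rw [hcard, this]

lemma circuitPartPoly_circle (x : ℂ) : circuitPartPoly circleGraph x = x := by
  classical
  rw [circuitPartPoly]
  haveI : Unique {κ : Fin circleGraph.m × Bool → Fin circleGraph.m × Bool //
      IsTransition circleGraph κ} := by
    refine ⟨⟨⟨flipDart circleGraph, (isTransition_circle_iff _).2 rfl⟩⟩, ?_⟩
    rintro ⟨κ, hκ⟩
    exact Subtype.ext ((isTransition_circle_iff κ).1 hκ)
  rw [Fintype.sum_eq_single (default : {κ : Fin circleGraph.m × Bool → Fin circleGraph.m × Bool //
      IsTransition circleGraph κ}) (fun b hb => absurd (Subsingleton.elim b default) hb)]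
  have hd : (default : {κ : Fin circleGraph.m × Bool → Fin circleGraph.m × Bool //
      IsTransition circleGraph κ}) =
      ⟨flipDart circleGraph, (isTransition_circle_iff _).2 rfl⟩ := Subsingleton.elim _ _
  rw [hd]
  show x ^ tsCircuitCount circleGraph (flipDart circleGraph) = x
  rw [tsCircuitCount_circle_flip, pow_one]

/-- **Remark.** The circuit partition polynomial evaluated at any `x ∉ ℤ` is not the
mixed partition function of any `(k,2ℓ)`-colour edge colouring model. -/
theorem circuitPoly_not_mixedPF (x : ℂ) (hx : ∀ n : ℤ, x ≠ (n : ℂ)) (k l : ℕ) :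
    ¬ ∃ h : MvPolynomial (Fin k) ℂ ⊗[ℂ] ExteriorAlgebra ℂ (Fin (2 * l) → ℂ) →ₗ[ℂ] ℂ,
        ∀ G : MGraph, mixedPF k l h G = circuitPartPoly G x := by
  rintro ⟨h, hP⟩
  have h1 := mixedPF_circle k l h
  have h2 := circuitPartPoly_circle x
  refine hx ((k : ℤ) - 2 * l) ?_
  rw [← h2, ← hP, h1]
  push_cast
  ring
end

section
/- For n ≥ 3, the determinant of the adjacency matrix A(C_n) of the cycle graph C_n satisfies: det A(C_n) = 0 if n ≡ 0 (mod 4), det A(C_n) < 0 if n ≡ 2 (mod 4), and det A(C_n) > 0 if n is odd. -/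
/-!
`A(C_n)` is the circulant matrix with first row `e₁ + e₋₁`. The Vandermonde matrix of a
primitive `n`-th root of unity `ω` diagonalises every circulant matrix, so `det A(C_n)` is the
product of the eigenvalues `ω^k + ω^{-k}`, `0 ≤ k < n`. Since `∏ ω^k = (-1)^{n+1}` and
`ω^k (ω^k + ω^{-k}) = ω^{2k} + 1 = (i - ω^k)(-i - ω^k)`, evaluating `∏ (X - ω^k) = X^n - 1`
at `±i` gives `(-1)^{n+1} det A(C_n) = (i^n - 1)((-i)^n - 1)`, so `det A(C_n)` is `0`, `-4`
or `2` according as `n ≡ 0`, `n ≡ 2 (mod 4)` or `n` is odd.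
-/

open Finset Polynomial Matrix Complex

lemma pow_val_add_of_pow_eq_one {M : Type*} [Monoid M] {n : ℕ} {ζ : M} (hζ : ζ ^ n = 1)
    (a b : Fin n) :
    ζ ^ ((a + b : Fin n) : ℕ) = ζ ^ (a : ℕ) * ζ ^ (b : ℕ) := by
  rw [Fin.val_add, ← pow_eq_pow_mod _ hζ, pow_add]

section Circulant

variable {R : Type*} [CommRing R] {n : ℕ} [NeZero n]

lemma vandermonde_mul_circulant {ω : R} (hω : ω ^ n = 1) (v : Fin n → R) :
    vandermonde (fun k : Fin n => ω ^ (k : ℕ)) * circulant v =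
      diagonal (fun k : Fin n => ∑ l, v l * (ω ^ (k : ℕ)) ^ (l : ℕ)) *
        vandermonde (fun k : Fin n => ω ^ (k : ℕ)) := by
  ext k j
  have hζ : (ω ^ (k : ℕ)) ^ n = 1 := by rw [pow_right_comm, hω, one_pow]
  rw [Matrix.mul_apply, Matrix.diagonal_mul, Finset.sum_mul, eq_comm]
  refine Fintype.sum_equiv (Equiv.addRight j) _ _ fun l => ?_
  simp only [vandermonde_apply, circulant_apply, Equiv.coe_addRight, add_sub_cancel_right,
    pow_val_add_of_pow_eq_one hζ]
  ring

lemma det_circulant [IsDomain R] {ω : R} (hω : IsPrimitiveRoot ω n) (v : Fin n → R) :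
    (circulant v).det = ∏ k : Fin n, ∑ l, v l * (ω ^ (k : ℕ)) ^ (l : ℕ) := by
  have hV : (vandermonde fun k : Fin n => ω ^ (k : ℕ)).det ≠ 0 :=
    det_vandermonde_ne_zero_iff.mpr fun a b h => Fin.ext (hω.pow_inj a.isLt b.isLt h)
  have h := congrArg det (vandermonde_mul_circulant hω.pow_eq_one v)
  rw [det_mul, det_mul, det_diagonal, mul_comm] at h
  exact mul_right_cancel₀ hV h

end Circulant

lemma IsPrimitiveRoot.prod_sub_pow {R : Type*} [CommRing R] [IsDomain R] {ω : R} {n : ℕ}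
    (hω : IsPrimitiveRoot ω n) (hn : 0 < n) (a : R) :
    ∏ k ∈ range n, (a - ω ^ k) = a ^ n - 1 := by
  have h := congrArg (eval a) (X_pow_sub_C_eq_prod hω hn (one_pow n))
  simpa [eval_prod] using h.symm

lemma Fin.one_ne_neg_one {n : ℕ} [NeZero n] (hn : 3 ≤ n) : (1 : Fin n) ≠ -1 := by
  intro h
  have h2 := congrArg Fin.val (eq_neg_iff_add_eq_zero.mp h)
  rw [Fin.val_add, Fin.val_one', Nat.one_mod_eq_one.mpr (by omega), Fin.val_zero,
    Nat.mod_eq_of_lt (by omega)] at h2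
  omega

lemma cycAdj_eq_circulant {n : ℕ} [NeZero n] (hn : 3 ≤ n) :
    cycAdj n = circulant (Pi.single 1 1 + Pi.single (-1) 1) := by
  have hsucc (a b : Fin n) : (b : ℕ) = ((a : ℕ) + 1) % n ↔ b - a = 1 := by
    rw [← Nat.add_mod_mod, ← Fin.val_one', ← Fin.val_add, ← Fin.ext_iff, sub_eq_iff_eq_add']
  ext i j
  rw [cycAdj, circulant_apply]
  simp only [hsucc, Pi.add_apply, Pi.single_apply, ← neg_sub j i, neg_eq_iff_eq_neg, neg_neg]
  have h1 := Fin.one_ne_neg_one hn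
  split_ifs <;> simp_all

lemma sum_cycle_mul_pow {K : Type*} [Field K] {n : ℕ} [NeZero n] {ζ : K}
    (hζ : ζ ^ n = 1) :
    ∑ l : Fin n, (Pi.single 1 1 + Pi.single (-1) 1 : Fin n → K) l * ζ ^ (l : ℕ) =
      ζ + ζ⁻¹ := by
  simp only [Pi.add_apply, add_mul, sum_add_distrib, Pi.single_apply, ite_mul, one_mul,
    zero_mul, sum_ite_eq', mem_univ, if_true]
  have hone : ζ ^ ((1 : Fin n) : ℕ) = ζ := by
    rw [Fin.val_one', ← pow_eq_pow_mod _ hζ, pow_one]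
  have hneg : ζ ^ ((1 : Fin n) : ℕ) * ζ ^ ((-1 : Fin n) : ℕ) = 1 := by
    rw [← pow_val_add_of_pow_eq_one hζ, add_neg_cancel, Fin.val_zero, pow_zero]
  rw [hone] at hneg ⊢
  rw [eq_inv_of_mul_eq_one_right hneg]

lemma IsPrimitiveRoot.prod_pow_eq_neg_one_pow {R : Type*} [CommRing R] [IsDomain R] {ω : R}
    {n : ℕ} (hω : IsPrimitiveRoot ω n) (hn : 0 < n) :
    ∏ k ∈ range n, ω ^ k = (-1) ^ (n + 1) := by
  have h := hω.prod_sub_pow hn 0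
  simp only [zero_sub, prod_neg, card_range, zero_pow hn.ne'] at h
  have hsq : ((-1 : R) ^ n) ^ 2 = 1 := by rw [← pow_mul, pow_mul', neg_one_sq, one_pow]
  linear_combination (-1) ^ n * h - (∏ k ∈ range n, ω ^ k) * hsq

lemma IsPrimitiveRoot.prod_pow_add_inv {K : Type*} [Field K] {ω : K} {n : ℕ}
    (hω : IsPrimitiveRoot ω n) (hn : 0 < n) {ι : K} (hι : ι ^ 2 = -1) :
    (-1) ^ (n + 1) * ∏ k ∈ range n, (ω ^ k + (ω ^ k)⁻¹) =
      (ι ^ n - 1) * ((-ι) ^ n - 1) := by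
  have hω0 : ω ≠ 0 := hω.ne_zero hn.ne'
  calc (-1) ^ (n + 1) * ∏ k ∈ range n, (ω ^ k + (ω ^ k)⁻¹)
      = ∏ k ∈ range n, ((ι - ω ^ k) * (-ι - ω ^ k)) := by
        rw [← hω.prod_pow_eq_neg_one_pow hn, ← prod_mul_distrib]
        refine prod_congr rfl fun k _ => ?_
        have : ω ^ k ≠ 0 := pow_ne_zero k hω0
        field_simp
        linear_combination hι
    _ = (ι ^ n - 1) * ((-ι) ^ n - 1) := by
        rw [prod_mul_distrib, hω.prod_sub_pow hn, hω.prod_sub_pow hn]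

lemma map_cycAdj_ofReal {n : ℕ} [NeZero n] (hn : 3 ≤ n) :
    (cycAdj n).map ofRealHom = circulant (Pi.single 1 1 + Pi.single (-1) 1) := by
  rw [cycAdj_eq_circulant hn, map_circulant]
  congr 1
  ext l
  simp only [Pi.add_apply, map_add, Pi.single_apply]
  split_ifs <;> simp

lemma neg_one_pow_mul_det_cycAdj {n : ℕ} (hn : 3 ≤ n) :
    (-1) ^ (n + 1) * ((cycAdj n).det : ℂ) = (I ^ n - 1) * ((-I) ^ n - 1) := by
  have : NeZero n := ⟨by omega⟩
  obtain ⟨ω, hω⟩ : ∃ ω : ℂ, IsPrimitiveRoot ω n :=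
    ⟨_, isPrimitiveRoot_exp n (by omega)⟩
  rw [← hω.prod_pow_add_inv (by omega) I_sq, ← ofRealHom_eq_coe, ofRealHom.map_det,
    RingHom.mapMatrix_apply, map_cycAdj_ofReal hn, det_circulant hω,
    ← Fin.prod_univ_eq_prod_range (fun k => ω ^ k + (ω ^ k)⁻¹)]
  congr 1
  refine prod_congr rfl fun k _ => sum_cycle_mul_pow ?_
  rw [pow_right_comm, hω.pow_eq_one, one_pow]

lemma det_cycAdj_of_mod_four {n r : ℕ} (hn : 3 ≤ n) (hr : n % 4 = r) :
    (-1) ^ (r + 1) * ((cycAdj n).det : ℂ) = (I ^ r - 1) * ((-I) ^ r - 1) := by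
  obtain ⟨q, rfl⟩ : ∃ q, n = 4 * q + r := ⟨n / 4, by omega⟩
  have h₁ : (-1 : ℂ) ^ 4 = 1 := by norm_num
  have h₂ : (-I) ^ 4 = 1 := by rw [neg_pow, I_pow_four, h₁, one_mul]
  simpa [pow_add, pow_mul, h₁, h₂, I_pow_four] using neg_one_pow_mul_det_cycAdj hn

lemma det_cycAdj_of_mod_four_eq_zero {n : ℕ} (hn : 3 ≤ n) (h : n % 4 = 0) :
    (cycAdj n).det = 0 := by
  simpa using det_cycAdj_of_mod_four hn h

lemma det_cycAdj_of_mod_four_eq_two {n : ℕ} (hn : 3 ≤ n) (h : n % 4 = 2) :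
    (cycAdj n).det = -4 := by
  have key := det_cycAdj_of_mod_four hn h
  norm_num [pow_succ] at key
  exact_mod_cast (show ((cycAdj n).det : ℂ) = -4 by linear_combination -key)

lemma det_cycAdj_of_odd {n : ℕ} (hn : 3 ≤ n) (h : Odd n) : (cycAdj n).det = 2 := by
  suffices ((cycAdj n).det : ℂ) = 2 by exact_mod_cast this
  rcases Nat.odd_mod_four_iff.mp (Nat.odd_iff.mp h) with h | h <;>
  · have key := det_cycAdj_of_mod_four hn h
    norm_num [pow_succ] at key
    linear_combination key - I_sq

/-- The determinant of the adjacency matrix of the cycle `C_n` (`n ≥ 3`) vanishes for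
`n ≡ 0 (mod 4)`, is negative for `n ≡ 2 (mod 4)`, and is positive for odd `n`. -/
theorem det_cycAdj (n : ℕ) (hn : 3 ≤ n) :
    (n % 4 = 0 → (cycAdj n).det = 0) ∧
    (n % 4 = 2 → (cycAdj n).det < 0) ∧
    (Odd n → 0 < (cycAdj n).det) := by
  refine ⟨det_cycAdj_of_mod_four_eq_zero hn, fun h => ?_, fun h => ?_⟩
  · rw [det_cycAdj_of_mod_four_eq_two hn h]
    norm_num
  · rw [det_cycAdj_of_odd hn h]
    norm_num
end
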